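/- Let A and B be effects on a complex separable Hilbert space H. Then the set lb(A,B) = {C : 0 ≤ C ≤ I, C ≤ A, C ≤ B} of effect lower bounds of A and B (ordered by the Loewner order) possesses a maximal element, i.e. there exists C ∈ lb(A,B) such that for every D ∈ lb(A,B), C ≤ D implies C = D. -/

import Mathlib

open ContinuousLinearMap

section Aux

variable {H : Type*} [NormedAddCommGroup H] [InnerProductSpace ℂ H] [CompleteSpace H]

local notation "⟪" x ", " y "⟫" => @inner ℂ _ _ x y

/-- For `0 ≤ T ≤ 1`, `‖T x‖ ^ 2 ≤ re ⟪T x, x⟫`. -/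
lemma norm_sq_le_re_inner {T : H →L[ℂ] H} (h0 : 0 ≤ T) (h1 : T ≤ 1) (x : H) :
    ‖T x‖ ^ 2 ≤ RCLike.re ⟪T x, x⟫ := by
  have hp : T.IsPositive := (nonneg_iff_isPositive T).mp h0
  have hsym := hp.isSelfAdjoint.isSymmetric
  set a : ℝ := RCLike.re ⟪T x, x⟫ with ha_def
  set n : ℝ := ‖T x‖ with hn_def
  set b : ℝ := RCLike.re ⟪T (T x), T x⟫ with hb_def
  have ha : 0 ≤ a := hp.re_inner_nonneg_left x
  have hb0 : 0 ≤ b := hp.re_inner_nonneg_left (T x)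
  have hb_le : b ≤ n ^ 2 := by
    have h1' := ((le_def T 1).mp h1).re_inner_nonneg_left (T x)
    have he : ((1 : H →L[ℂ] H) - T) (T x) = T x - T (T x) := by
      simp [sub_apply]
    rw [he, inner_sub_left] at h1'
    have : RCLike.re ⟪T x, T x⟫ = n ^ 2 := by
      rw [hn_def]; exact inner_self_eq_norm_sq (𝕜 := ℂ) (T x)
    simp only [map_sub] at h1'
    rw [this] at h1'
    linarith
  have hquad : ∀ t : ℝ, 0 ≤ b * (t * t) + (2 * n ^ 2) * t + a := by
    intro t
    have h := hp.re_inner_nonneg_left (x + (t : ℂ) • T x)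
    have hTx : T (x + (t : ℂ) • T x) = T x + (t : ℂ) • T (T x) := by
      simp [map_add, map_smul]
    rw [hTx] at h
    have expand : ⟪T x + (t : ℂ) • T (T x), x + (t : ℂ) • T x⟫
        = ⟪T x, x⟫ + (t : ℂ) * ⟪T x, T x⟫ + (t : ℂ) * ⟪T (T x), x⟫
          + (t : ℂ) * ((t : ℂ) * ⟪T (T x), T x⟫) := by
      simp only [inner_add_left, inner_add_right, inner_smul_left, inner_smul_right,
        Complex.conj_ofReal]
      ring
    rw [expand] at h
    have hsymx : ⟪T (T x), x⟫ = ⟪T x, T x⟫ := hsym (T x) x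
    rw [hsymx] at h
    have hTT : RCLike.re ⟪T x, T x⟫ = n ^ 2 := by
      rw [hn_def]; exact inner_self_eq_norm_sq (𝕜 := ℂ) (T x)
    simp only [map_add, RCLike.re_to_complex, Complex.re_ofReal_mul] at h
    simp only [RCLike.re_to_complex] at hTT ha_def hb_def
    rw [hTT, ← ha_def, ← hb_def] at h
    nlinarith [h]
  have hdisc := discrim_le_zero hquad
  rw [discrim] at hdisc
  have h4 : n ^ 2 * n ^ 2 ≤ b * a := by nlinarith [hdisc]
  by_cases hn : n = 0
  · rw [hn_def] at hn
    have : ‖T x‖ ^ 2 = 0 := by rw [hn]; ring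
    rw [this]; exact ha
  · have hn2 : (0 : ℝ) < n ^ 2 := by positivity
    have h5 : b * a ≤ n ^ 2 * a := mul_le_mul_of_nonneg_right hb_le ha
    have : n ^ 2 * n ^ 2 ≤ n ^ 2 * a := le_trans h4 h5
    exact le_of_mul_le_mul_left this hn2

lemma re_inner_mono {C D : H →L[ℂ] H} (h : C ≤ D) (x : H) :
    RCLike.re ⟪C x, x⟫ ≤ RCLike.re ⟪D x, x⟫ := by
  have := ((le_def C D).mp h).re_inner_nonneg_left x
  have he : (D - C) x = D x - C x := by simp [sub_apply]
  rw [he, inner_sub_left, map_sub] at this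
  linarith

lemma sub_nonneg_clm {C D : H →L[ℂ] H} (h : C ≤ D) : (0 : H →L[ℂ] H) ≤ D - C := by
  rw [nonneg_iff_isPositive]
  exact (le_def C D).mp h

lemma sub_le_one_clm {C D : H →L[ℂ] H} (hC : 0 ≤ C) (hD : D ≤ 1) : D - C ≤ 1 := by
  rw [le_def]
  have h1 := (le_def D 1).mp hD
  have h2 := (nonneg_iff_isPositive C).mp hC
  have : (1 : H →L[ℂ] H) - (D - C) = (1 - D) + C := by abel
  rw [this]
  exact h1.add h2

lemma dist_sq_le {C D : H →L[ℂ] H} (hC0 : 0 ≤ C) (hCD : C ≤ D) (hD1 : D ≤ 1) (x : H) :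
    ‖D x - C x‖ ^ 2 ≤ RCLike.re ⟪D x, x⟫ - RCLike.re ⟪C x, x⟫ := by
  have h0 := sub_nonneg_clm hCD
  have h1 := sub_le_one_clm hC0 hD1
  have key := norm_sq_le_re_inner h0 h1 x
  have he : (D - C) x = D x - C x := by simp [sub_apply]
  rw [he, inner_sub_left, map_sub] at key
  linarith

end Aux

/-- the set of effect lower bounds of two effects has a maximal
element. -/
theorem effects_lower_bounds_have_maximal_element
    {H : Type*} [NormedAddCommGroup H] [InnerProductSpace ℂ H] [CompleteSpace H]
    [TopologicalSpace.SeparableSpace H]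
    (A B : H →L[ℂ] H) (hA0 : 0 ≤ A) (hA1 : A ≤ 1) (hB0 : 0 ≤ B) (hB1 : B ≤ 1) :
    ∃ C : H →L[ℂ] H, (0 ≤ C ∧ C ≤ 1 ∧ C ≤ A ∧ C ≤ B) ∧
      ∀ D : H →L[ℂ] H, (0 ≤ D ∧ D ≤ 1 ∧ D ≤ A ∧ D ≤ B) → C ≤ D → C = D := by
  classical
  set S : Set (H →L[ℂ] H) := {C | 0 ≤ C ∧ C ≤ 1 ∧ C ≤ A ∧ C ≤ B} with hS_def
  have h0S : (0 : H →L[ℂ] H) ∈ S :=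
    ⟨le_refl 0, (nonneg_iff_isPositive (1 : H →L[ℂ] H)).mpr isPositive_one, hA0, hB0⟩
  have hZorn : ∀ c ⊆ S, IsChain (· ≤ ·) c → ∃ ub ∈ S, ∀ z ∈ c, z ≤ ub := by
    intro c hcS hc
    rcases Set.eq_empty_or_nonempty c with hce | ⟨C₀, hC₀⟩
    · exact ⟨0, h0S, by simp [hce]⟩
    letI : LinearOrder ↥c :=
      { (inferInstance : PartialOrder ↥c) with
        le_total := fun a b => hc.total a.2 b.2
        toDecidableLE := Classical.decRel _ }
    haveI : Nonempty ↥c := ⟨⟨C₀, hC₀⟩⟩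
    -- properties of members of c
    have hc0 : ∀ i : ↥c, (0 : H →L[ℂ] H) ≤ i.1 := fun i => (hcS i.2).1
    have hc1 : ∀ i : ↥c, i.1 ≤ 1 := fun i => (hcS i.2).2.1
    have hcA : ∀ i : ↥c, i.1 ≤ A := fun i => (hcS i.2).2.2.1
    have hcB : ∀ i : ↥c, i.1 ≤ B := fun i => (hcS i.2).2.2.2
    -- the real quadratic forms
    set f : ↥c → H → ℝ := fun i x => RCLike.re (inner (𝕜 := ℂ) (i.1 x) x) with hf_def
    have hfmono : ∀ x : H, Monotone fun i : ↥c => f i x := fun x i j hij =>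
      re_inner_mono hij x
    have hfbdd : ∀ x : H, BddAbove (Set.range fun i : ↥c => f i x) := by
      intro x
      refine ⟨‖x‖ ^ 2, ?_⟩
      rintro r ⟨i, rfl⟩
      have := re_inner_mono (hc1 i) x
      simpa [hf_def, inner_self_eq_norm_sq (𝕜 := ℂ) x, ← Complex.ofReal_pow, Complex.ofReal_re] using this
    have hftend : ∀ x : H, Filter.Tendsto (fun i : ↥c => f i x) Filter.atTop
        (nhds (⨆ i : ↥c, f i x)) := fun x => tendsto_atTop_ciSup (hfmono x) (hfbdd x)
    -- the vector net is Cauchy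
    have hcauchy : ∀ x : H, CauchySeq fun i : ↥c => i.1 x := by
      intro x
      rw [Metric.cauchySeq_iff]
      intro ε hε
      have hfc : CauchySeq fun i : ↥c => f i x := (hftend x).cauchySeq
      rw [Metric.cauchySeq_iff] at hfc
      obtain ⟨N, hN⟩ := hfc (ε ^ 2) (by positivity)
      refine ⟨N, fun m hm n hn => ?_⟩
      have key : ∀ p q : ↥c, p ≤ q → N ≤ p → N ≤ q →
          dist (p.1 x) (q.1 x) < ε := by
        intro p q hpq hNp hNq
        have hd := dist_sq_le (hc0 p) (hpq : p.1 ≤ q.1) (hc1 q) x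
        have hfd := hN q hNq p hNp
        rw [Real.dist_eq] at hfd
        have habs : f q x - f p x < ε ^ 2 := lt_of_le_of_lt (le_abs_self _) hfd
        have hdist : dist (p.1 x) (q.1 x) = ‖q.1 x - p.1 x‖ := by
          rw [dist_comm, dist_eq_norm]
        rw [hdist]
        nlinarith [norm_nonneg (q.1 x - p.1 x), hd]
      rcases le_total m n with hmn | hnm
      · exact key m n hmn hm hn
      · rw [dist_comm]; exact key n m hnm hn hm
    -- limits
    have hex : ∀ x : H, ∃ y : H, Filter.Tendsto (fun i : ↥c => i.1 x) Filter.atTop (nhds y) :=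
      fun x => cauchySeq_tendsto_of_complete (hcauchy x)
    choose g hg using hex
    have hadd : ∀ x y : H, g (x + y) = g x + g y := by
      intro x y
      refine tendsto_nhds_unique ?_ ((hg x).add (hg y))
      have : (fun i : ↥c => i.1 (x + y)) = fun i : ↥c => i.1 x + i.1 y := by
        funext i; simp [map_add]
      rw [← this]; exact hg (x + y)
    have hsmul : ∀ (a : ℂ) (x : H), g (a • x) = a • g x := by
      intro a x
      refine tendsto_nhds_unique ?_ ((hg x).const_smul a)
      have : (fun i : ↥c => i.1 (a • x)) = fun i : ↥c => a • i.1 x := by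
        funext i; simp [map_smul]
      rw [← this]; exact hg (a • x)
    have hbound : ∀ x : H, ‖g x‖ ≤ 1 * ‖x‖ := by
      intro x
      rw [one_mul]
      refine le_of_tendsto ((hg x).norm) (Filter.Eventually.of_forall fun i => ?_)
      have h1 := norm_sq_le_re_inner (hc0 i) (hc1 i) x
      have h2 := re_inner_mono (hc1 i) x
      have h3 : RCLike.re (inner (𝕜 := ℂ) ((1 : H →L[ℂ] H) x) x) = ‖x‖ ^ 2 := by
        simp [inner_self_eq_norm_sq (𝕜 := ℂ) x, ← Complex.ofReal_pow, Complex.ofReal_re]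
      have : ‖i.1 x‖ ^ 2 ≤ ‖x‖ ^ 2 := by rw [h3] at h2; linarith
      exact (pow_le_pow_iff_left₀ (norm_nonneg _) (norm_nonneg _) two_ne_zero).mp this
    -- the limit operator
    set L : H →L[ℂ] H := LinearMap.mkContinuous
      { toFun := g
        map_add' := hadd
        map_smul' := hsmul } 1 hbound with hL_def
    have hLapp : ∀ x : H, L x = g x := fun x => rfl
    have hLtend : ∀ x : H, Filter.Tendsto (fun i : ↥c => i.1 x) Filter.atTop (nhds (L x)) := by
      intro x; rw [hLapp]; exact hg x
    have hinner : ∀ x y : H, Filter.Tendsto (fun i : ↥c => inner (𝕜 := ℂ) (i.1 x) y)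
        Filter.atTop (nhds (inner (𝕜 := ℂ) (L x) y)) :=
      fun x y => Filter.Tendsto.inner (hLtend x) tendsto_const_nhds
    -- self-adjointness
    have hLsym : (L : H →ₗ[ℂ] H).IsSymmetric := by
      intro x y
      refine tendsto_nhds_unique (hinner x y) ?_
      have heq : (fun i : ↥c => inner (𝕜 := ℂ) (i.1 x) y)
          = fun i : ↥c => inner (𝕜 := ℂ) x (i.1 y) := by
        funext i
        exact ((nonneg_iff_isPositive i.1).mp (hc0 i)).isSelfAdjoint.isSymmetric x y
      rw [heq]
      exact Filter.Tendsto.inner tendsto_const_nhds (hLtend y)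
    have hLsa : IsSelfAdjoint L := hLsym.isSelfAdjoint
    -- the quadratic form of L is the supremum
    have hLsup : ∀ x : H, RCLike.re (inner (𝕜 := ℂ) (L x) x) = ⨆ i : ↥c, f i x := by
      intro x
      refine tendsto_nhds_unique ?_ (hftend x)
      exact (Complex.continuous_re.tendsto _).comp (hinner x x)
    -- comparison of self-adjoint operators via quadratic forms
    have hAsa : IsSelfAdjoint A := ((nonneg_iff_isPositive A).mp hA0).isSelfAdjoint
    have hBsa : IsSelfAdjoint B := ((nonneg_iff_isPositive B).mp hB0).isSelfAdjoint
    have cmp : ∀ X Y : H →L[ℂ] H, IsSelfAdjoint X → IsSelfAdjoint Y →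
        (∀ x : H, RCLike.re (inner (𝕜 := ℂ) (X x) x) ≤ RCLike.re (inner (𝕜 := ℂ) (Y x) x)) →
        X ≤ Y := by
      intro X Y hX hY h
      rw [le_def]
      refine ⟨(hY.sub hX).isSymmetric, fun x => ?_⟩
      rw [reApplyInnerSelf_apply]
      have he : (Y - X) x = Y x - X x := by simp [sub_apply]
      rw [he, inner_sub_left, map_sub, sub_nonneg]
      exact h x
    have hL1 : L ≤ 1 :=
      cmp L 1 hLsa isPositive_one.isSelfAdjoint fun x => by
        rw [hLsup x]
        exact ciSup_le fun i => re_inner_mono (hc1 i) x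
    have hLA : L ≤ A :=
      cmp L A hLsa hAsa fun x => by
        rw [hLsup x]
        exact ciSup_le fun i => re_inner_mono (hcA i) x
    have hLB : L ≤ B :=
      cmp L B hLsa hBsa fun x => by
        rw [hLsup x]
        exact ciSup_le fun i => re_inner_mono (hcB i) x
    have hL0 : (0 : H →L[ℂ] H) ≤ L :=
      cmp 0 L isPositive_zero.isSelfAdjoint hLsa fun x => by
        rw [hLsup x]
        obtain ⟨i0⟩ := (inferInstance : Nonempty ↥c)
        have h1 : (0 : ℝ) ≤ f i0 x := ((nonneg_iff_isPositive _).mp (hc0 i0)).re_inner_nonneg_left x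
        have h2 : f i0 x ≤ ⨆ i : ↥c, f i x := le_ciSup (hfbdd x) i0
        simpa using le_trans h1 h2
    refine ⟨L, ⟨hL0, hL1, hLA, hLB⟩, fun z hz => ?_⟩
    refine cmp z L ((nonneg_iff_isPositive z).mp (hcS hz).1).isSelfAdjoint hLsa fun x => ?_
    rw [hLsup x]
    exact le_ciSup (hfbdd x) ⟨z, hz⟩
  obtain ⟨m, hm⟩ := zorn_le₀ S hZorn
  refine ⟨m, ⟨hm.1.1, hm.1.2.1, hm.1.2.2.1, hm.1.2.2.2⟩, fun D hD hmD => ?_⟩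
  exact le_antisymm hmD (hm.2 ⟨hD.1, hD.2.1, hD.2.2.1, hD.2.2.2⟩ hmD)
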